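/- arXiv:1105.2372 — 4 statements merged into one kernel-verified Lean document; each statement's English description precedes it below -/
import Mathlib

section
/- Let n be a positive integer and let S₂ be an infinite set of rational primes satisfying lim_{x→∞} θ_{S₂}(x)/x = 1/n. Let p_k denote the k-th smallest prime in S₂ and set d_k = p₁·p₂·⋯·p_k. Then for all sufficiently large k one has p_{k+1} < 2n·log d_k, and consequently for every sufficiently large natural number x there exists a prime p ∈ S₂ such that p does not divide x and p < 2n·log x. -/
/-! Write `q i = Nat.nth (· ∈ S₂) i` (the prime `p_{i+1}`) and `d i = q 0 ⋯ q (i - 1)`.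
The primes of `S₂` below `q k` are exactly `q 0, …, q (k - 1)`, so `θ_{S₂}(q k - 1) = log d k`
and the density hypothesis gives `log d k ~ q k / n`; hence `q k < 2n log d k` for `k ≥ K`.
For large `x`, let `q i` be the first prime of `S₂` not dividing `x`. Then `d i ∣ x`, so
`d i ≤ x`, and the bound at `j = max i K` gives `q i ≤ q j < 2n log d j ≤ 2n log x`. -/

open scoped Classical

/-- `primesLogSum S x` is `θ_S(x) = ∑_{p ∈ S, p ≤ x} log p`. -/
noncomputable def primesLogSum (S : Set ℕ) (x : ℝ) : ℝ :=
  ∑ p ∈ (Finset.range (⌊x⌋₊ + 1)).filter (fun p => p.Prime ∧ p ∈ S), Real.log p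

open Filter Topology Finset Nat

theorem Nat.filter_range_nth_eq_image_of_infinite {p : ℕ → Prop}
    (hp : (Set.ofPred p).Infinite) (k : ℕ) :
    {n ∈ range (nth p k) | p n} = (range k).image (nth p) := by
  induction k with
  | zero => simpa [count_eq_card_filter_range] using count_nth_zero p
  | succ k ih =>
    rw [filter_range_nth_eq_insert_of_infinite hp k, ih, range_add_one, image_insert]

theorem Filter.Tendsto.comp_sub_one_div {f : ℝ → ℝ} {c : ℝ}
    (h : Tendsto (fun x => f x / x) atTop (𝓝 c)) :
    Tendsto (fun x => f (x - 1) / x) atTop (𝓝 c) := by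
  have hshift := h.comp (tendsto_atTop_add_const_right _ (-1) tendsto_id)
  have hratio : Tendsto (fun x : ℝ => 1 - x⁻¹) atTop (𝓝 1) := by
    simpa using (tendsto_const_nhds (x := (1 : ℝ))).sub tendsto_inv_atTop_zero
  have hprod := hshift.mul hratio
  rw [mul_one] at hprod
  refine hprod.congr' ?_
  filter_upwards [eventually_gt_atTop 1] with x hx
  have : x - 1 ≠ 0 := by linarith
  simp only [Function.comp_apply, id, ← sub_eq_add_neg]
  field_simp

section PrimeSet

variable {S : Set ℕ}

theorem primesLogSum_nth_sub_one (hprime : ∀ p ∈ S, p.Prime) (hinf : S.Infinite) (k : ℕ) :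
    primesLogSum S ((nth (· ∈ S) k : ℝ) - 1) =
      Real.log (∏ i ∈ range k, (nth (· ∈ S) i : ℝ)) := by
  have hpos : ∀ i, 0 < nth (· ∈ S) i := fun i => (hprime _ (nth_mem_of_infinite hinf i)).pos
  have hfloor : ⌊(nth (· ∈ S) k : ℝ) - 1⌋₊ + 1 = nth (· ∈ S) k := by
    rw [Nat.floor_sub_one, Nat.floor_natCast]
    have := hpos k
    omega
  rw [primesLogSum, hfloor, Real.log_prod fun i _ => by have := hpos i; positivity,
    filter_congr fun m _ => and_iff_right_of_imp (hprime m),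
    filter_range_nth_eq_image_of_infinite (p := (· ∈ S)) hinf,
    sum_image fun a _ b _ hab => nth_injective (p := (· ∈ S)) hinf hab]

theorem eventually_nth_lt_mul_log_prod (hprime : ∀ p ∈ S, p.Prime) (hinf : S.Infinite)
    {a c : ℝ} (h : Tendsto (fun x => primesLogSum S x / x) atTop (𝓝 c)) (hac : 1 < a * c) :
    ∀ᶠ k in atTop,
      (nth (· ∈ S) k : ℝ) < a * Real.log (∏ i ∈ range k, (nth (· ∈ S) i : ℝ)) := by
  have hq : Tendsto (fun k => (nth (· ∈ S) k : ℝ)) atTop atTop :=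
    tendsto_natCast_atTop_atTop.comp (nth_strictMono hinf).tendsto_atTop
  have hratio : Tendsto (fun k => Real.log (∏ i ∈ range k, (nth (· ∈ S) i : ℝ)) /
      nth (· ∈ S) k) atTop (𝓝 c) := by
    simpa only [Function.comp_def, primesLogSum_nth_sub_one hprime hinf] using
      h.comp_sub_one_div.comp hq
  filter_upwards [(hratio.const_mul a).eventually (lt_mem_nhds hac),
    hq.eventually_gt_atTop 0] with k hk hpos
  rwa [← mul_div_assoc, one_lt_div hpos] at hk

theorem prod_range_nth_dvd (hprime : ∀ p ∈ S, p.Prime) (hinf : S.Infinite) {x k : ℕ}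
    (hdvd : ∀ i < k, nth (· ∈ S) i ∣ x) : ∏ i ∈ range k, nth (· ∈ S) i ∣ x := by
  have hp : ∀ i, (nth (· ∈ S) i).Prime := fun i => hprime _ (nth_mem_of_infinite hinf i)
  refine prod_dvd_of_isRelPrime (fun i _ j _ hij => ?_) fun i hi => hdvd i (mem_range.1 hi)
  exact Nat.coprime_iff_isRelPrime.1 <|
    (coprime_primes (hp i) (hp j)).2 fun h => hij (nth_injective hinf h)

theorem eventually_exists_not_dvd_lt (hprime : ∀ p ∈ S, p.Prime) (hinf : S.Infinite)
    {f : ℝ → ℝ} (hf : MonotoneOn f (Set.Ici 1))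
    (h : ∀ᶠ k in atTop, (nth (· ∈ S) k : ℝ) < f (∏ i ∈ range k, (nth (· ∈ S) i : ℝ))) :
    ∀ᶠ x : ℕ in atTop, ∃ p ∈ S, ¬ p ∣ x ∧ (p : ℝ) < f x := by
  set q := nth (· ∈ S)
  set d : ℕ → ℕ := fun k => ∏ i ∈ range k, q i
  have hq_pos : ∀ i, 0 < q i := fun i => (hprime _ (nth_mem_of_infinite hinf i)).pos
  have hd_pos : ∀ k, 0 < d k := fun k => prod_pos fun i _ => hq_pos i
  have hd_mono : Monotone d := fun a b hab =>
    prod_le_prod_of_subset_of_one_le' (range_subset_range.2 hab) fun i _ _ => hq_pos i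
  obtain ⟨K, hK⟩ := eventually_atTop.1 h
  filter_upwards [eventually_ge_atTop (d K)] with x hx
  have hx0 : 0 < x := (hd_pos K).trans_le hx
  -- the `i`-th element of `S` is at least `i`, so it cannot divide `x` once `i > x`
  have hex : ∃ i, ¬ q i ∣ x := ⟨x + 1, fun hdvd =>
    (Nat.le_of_dvd hx0 hdvd).not_gt ((nth_strictMono hinf).le_apply.trans_lt' (lt_add_one x))⟩
  set i := Nat.find hex
  have hdi : d i ≤ x := Nat.le_of_dvd hx0 <|
    prod_range_nth_dvd hprime hinf fun j hj => not_not.1 (Nat.find_min hex hj)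
  have hdj : d (max i K) ≤ x := by rw [hd_mono.map_max]; exact max_le hdi hx
  refine ⟨q i, nth_mem_of_infinite hinf i, Nat.find_spec hex, ?_⟩
  calc (q i : ℝ) ≤ q (max i K) := by exact_mod_cast nth_monotone hinf (le_max_left i K)
    _ < f (d (max i K)) := by simpa [d] using hK _ (le_max_right i K)
    _ ≤ f x := hf (Set.mem_Ici.2 (Nat.one_le_cast.2 (hd_pos _)))
        (Set.mem_Ici.2 (Nat.one_le_cast.2 hx0)) (by exact_mod_cast hdj)

end PrimeSet

/-- If `S₂` is an infinite set of primes with `θ_{S₂}(x)/x → 1/n`, then (writing `p_{k+1}`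
for the `k`-th prime of `S₂` in increasing 0-indexed enumeration `Nat.nth`, and
`d_k = p₁⋯p_k`) for all sufficiently large `k` we have `p_{k+1} < 2n·log d_k`; consequently
every sufficiently large natural number `x` admits a prime `p ∈ S₂` with `p ∤ x` and
`p < 2n·log x`. -/
theorem nth_prime_lt_of_theta_density
    (n : ℕ) (hn : 0 < n) (S₂ : Set ℕ) (hprime : ∀ p ∈ S₂, p.Prime) (hinf : S₂.Infinite)
    (h : Filter.Tendsto (fun x : ℝ => primesLogSum S₂ x / x) Filter.atTop (nhds (1 / n))) :
    (∀ᶠ k : ℕ in Filter.atTop,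
      (Nat.nth (· ∈ S₂) k : ℝ) <
        2 * n * Real.log (∏ i ∈ Finset.range k, (Nat.nth (· ∈ S₂) i : ℝ))) ∧
    (∀ᶠ x : ℕ in Filter.atTop,
      ∃ p ∈ S₂, ¬ p ∣ x ∧ (p : ℝ) < 2 * n * Real.log x) := by
  have hn' : (n : ℝ) ≠ 0 := by positivity
  have hnth := eventually_nth_lt_mul_log_prod hprime hinf h (a := 2 * n) (by field_simp; norm_num)
  have hlog_mono : MonotoneOn (fun x : ℝ => 2 * n * Real.log x) (Set.Ici 1) :=
    fun _ ha _ _ hab => by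
      have := Real.log_le_log (one_pos.trans_le ha) hab
      dsimp only
      gcongr
  exact ⟨hnth, eventually_exists_not_dvd_lt hprime hinf hlog_mono hnth⟩
end

section
/- Let K be a number field of degree m over ℚ with ring of integers 𝓞_K, let R be a finite subset of SL₂(K), and let β' ∈ 𝓞_K be nonzero such that β'·γ has all four entries in 𝓞_K for every γ ∈ R and every γ⁻¹ with γ ∈ R. Let C₁ ≥ 1 be a real number bounding |σ(a)| for every entry a of every γ ∈ R and every γ⁻¹ (γ ∈ R) and every embedding σ : K → ℂ, and let C₂ = max over embeddings σ of |σ(β')|. Then for every ω ∈ SL₂(K) that is a product of k ≥ 1 matrices from R or inverses of matrices of R, there exist α, β ∈ 𝓞_K with β ≠ 0 such that tr(ω) = α/β and both |N_{K/ℚ}(α + 2β)| ≤ (2·(2C₁C₂)^{k})^{m} and |N_{K/ℚ}(α − 2β)| ≤ (2·(2C₁C₂)^{k})^{m}. -/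
/-!
Take `β = β'^k` and `α = β'^k · tr ω`. Scaling each of the `k` factors of `ω` by `β'` makes all
entries integral, so `α ∈ 𝓞_K`. Every conjugate of an entry of a product of `k` matrices with
entries bounded by `C₁` is at most `C₁ (2C₁)^(k-1)`, hence `|σ(α ± 2β)| ≤ C₂^k ((2C₁)^k + 2)`,
which is at most `2 (2C₁C₂)^k` because `C₁ ≥ 1`. The absolute norm is the product of the `m`
conjugates.
-/

open NumberField

namespace Matrix

variable {n : Type*} [Fintype n]

theorem isIntegral_mul_apply {R S : Type*} [CommRing R] [CommRing S] [Algebra R S]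
    {A B : Matrix n n S} (hA : ∀ i j, IsIntegral R (A i j)) (hB : ∀ i j, IsIntegral R (B i j))
    (i j : n) : IsIntegral R ((A * B) i j) :=
  IsIntegral.sum _ fun r _ => (hA i r).mul (hB r j)

variable [DecidableEq n]

theorem isIntegral_pow_length_smul_list_prod_apply {R S : Type*} [CommRing R]
    [CommRing S] [Algebra R S] (b : S) {l : List (Matrix n n S)}
    (hl : ∀ A ∈ l, ∀ i j, IsIntegral R (b * A i j)) (i j : n) :
    IsIntegral R ((b ^ l.length • l.prod) i j) := by
  induction l generalizing i j with
  | nil =>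
    rw [List.length_nil, pow_zero, one_smul, List.prod_nil, one_apply]
    split_ifs
    exacts [isIntegral_one, isIntegral_zero]
  | cons A l ih =>
    have hsplit : b ^ (A :: l).length • (A :: l).prod = (b • A) * (b ^ l.length • l.prod) := by
      rw [List.prod_cons, List.length_cons, pow_succ', smul_mul_smul_comm]
    rw [hsplit]
    exact isIntegral_mul_apply (fun p q => hl A List.mem_cons_self p q)
      (ih fun B hB => hl B (List.mem_cons_of_mem A hB)) i j

theorem isIntegral_pow_length_mul_trace_list_prod {R S : Type*} [CommRing R] [CommRing S]
    [Algebra R S] (b : S) {l : List (Matrix n n S)}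
    (hl : ∀ A ∈ l, ∀ i j, IsIntegral R (b * A i j)) :
    IsIntegral R (b ^ l.length * trace l.prod) := by
  rw [← smul_eq_mul, ← trace_smul]
  exact IsIntegral.sum _ fun i _ => isIntegral_pow_length_smul_list_prod_apply b hl i i

variable {𝕜 : Type*} [SeminormedRing 𝕜] {C : ℝ}

theorem norm_list_prod_cons_apply_le {A : Matrix n n 𝕜} {l : List (Matrix n n 𝕜)}
    (hl : ∀ B ∈ A :: l, ∀ i j, ‖B i j‖ ≤ C) (i j : n) :
    ‖(A :: l).prod i j‖ ≤ C * (Fintype.card n * C) ^ l.length := by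
  induction l generalizing A i j with
  | nil => simpa using hl A List.mem_cons_self i j
  | cons B l ih =>
    have hA : ∀ p q, ‖A p q‖ ≤ C := hl A List.mem_cons_self
    have hC : 0 ≤ C := (norm_nonneg _).trans (hA i j)
    have hP := ih (fun M hM => hl M (List.mem_cons_of_mem A hM))
    calc ‖(A :: B :: l).prod i j‖
        ≤ ∑ r, ‖A i r‖ * ‖(B :: l).prod r j‖ := by
          rw [List.prod_cons, mul_apply]
          exact (norm_sum_le _ _).trans (Finset.sum_le_sum fun r _ => norm_mul_le _ _)
      _ ≤ ∑ _r : n, C * (C * (Fintype.card n * C) ^ l.length) := by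
          gcongr with r
          · exact hA i r
          · exact hP r j
      _ = C * (Fintype.card n * C) ^ (B :: l).length := by
          rw [Finset.sum_const, Finset.card_univ, nsmul_eq_mul, List.length_cons, pow_succ]
          ring

theorem norm_trace_list_prod_le {l : List (Matrix n n 𝕜)} (hne : l ≠ [])
    (hl : ∀ B ∈ l, ∀ i j, ‖B i j‖ ≤ C) : ‖trace l.prod‖ ≤ (Fintype.card n * C) ^ l.length := by
  obtain ⟨A, l, rfl⟩ := List.exists_cons_of_ne_nil hne
  calc ‖trace (A :: l).prod‖
      ≤ ∑ i, ‖(A :: l).prod i i‖ := norm_sum_le _ _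
    _ ≤ ∑ _i : n, C * (Fintype.card n * C) ^ l.length :=
        Finset.sum_le_sum fun i _ => norm_list_prod_cons_apply_le hl i i
    _ = (Fintype.card n * C) ^ (A :: l).length := by
        rw [Finset.sum_const, Finset.card_univ, nsmul_eq_mul, List.length_cons, pow_succ]
        ring

theorem norm_map_trace_list_prod_le {S : Type*} [Semiring S] (σ : S →+* 𝕜)
    {l : List (Matrix n n S)} (hne : l ≠ []) (hl : ∀ A ∈ l, ∀ i j, ‖σ (A i j)‖ ≤ C) :
    ‖σ (trace l.prod)‖ ≤ (Fintype.card n * C) ^ l.length := by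
  rw [AddMonoidHom.map_trace, ← RingHom.mapMatrix_apply, map_list_prod, ← l.length_map σ.mapMatrix]
  refine norm_trace_list_prod_le (List.map_eq_nil_iff.not.mpr hne) ?_
  simp only [List.mem_map]
  rintro _ ⟨A, hA, rfl⟩ i j
  exact hl A hA i j

theorem SpecialLinearGroup.forall_apply_of_mem_map_ofFn {R : Type*} [CommRing R]
    {S : Finset (SpecialLinearGroup n R)} {P : R → Prop}
    (hS : ∀ γ ∈ S, ∀ i j, P ((γ : Matrix n n R) i j) ∧ P ((↑γ⁻¹ : Matrix n n R) i j))
    {k : ℕ} {f : Fin k → SpecialLinearGroup n R} (hf : ∀ r, f r ∈ S ∨ (f r)⁻¹ ∈ S) :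
    ∀ A ∈ (List.ofFn f).map SpecialLinearGroup.coeMonoidHom, ∀ i j, P (A i j) := by
  simp only [List.mem_map, List.mem_ofFn, SpecialLinearGroup.coeMonoidHom_apply]
  rintro _ ⟨_, ⟨r, rfl⟩, rfl⟩ i j
  rcases hf r with hr | hr
  · exact (hS _ hr i j).1
  · simpa only [inv_inv] using (hS _ hr i j).2

end Matrix

namespace NumberField

variable {K : Type*} [Field K] [NumberField K]

theorem abs_norm_le_pow_finrank {x : K} {B : ℝ} (hx : ∀ σ : K →+* ℂ, ‖σ x‖ ≤ B) :
    |(Algebra.norm ℚ x : ℝ)| ≤ B ^ Module.finrank ℚ K := by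
  rw [← Rat.cast_abs, ← InfinitePlace.prod_eq_abs_norm, ← InfinitePlace.sum_mult_eq,
    ← Finset.prod_pow_eq_pow_sum]
  refine Finset.prod_le_prod (fun w _ => by positivity) fun w _ => ?_
  rw [← InfinitePlace.norm_embedding_eq]
  exact pow_le_pow_left₀ (norm_nonneg _) (hx _) _

theorem abs_norm_pow_mul_add_le {b t s : K} {c T : ℝ} (k : ℕ)
    (hb : ∀ σ : K →+* ℂ, ‖σ b‖ ≤ c) (ht : ∀ σ : K →+* ℂ, ‖σ t‖ ≤ T)
    (hs : ∀ σ : K →+* ℂ, ‖σ s‖ ≤ T) :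
    |(Algebra.norm ℚ (b ^ k * (t + s)) : ℝ)| ≤ (c ^ k * (2 * T)) ^ Module.finrank ℚ K := by
  refine abs_norm_le_pow_finrank fun σ => ?_
  have hc : 0 ≤ c := (norm_nonneg _).trans (hb σ)
  calc ‖σ (b ^ k * (t + s))‖ = ‖σ b‖ ^ k * ‖σ t + σ s‖ := by
        rw [map_mul, map_pow, map_add, norm_mul, norm_pow]
    _ ≤ c ^ k * (T + T) := by
        gcongr
        · exact hb σ
        · exact (norm_add_le _ _).trans (add_le_add (ht σ) (hs σ))
    _ = c ^ k * (2 * T) := by ring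

end NumberField

/-- Lemma on traces: if `ω ∈ SL₂(K)` is a product of `k ≥ 1` matrices from a finite set `R`
(or inverses thereof), `β' ∈ 𝓞_K ∖ {0}` clears the denominators of all entries of elements
of `R` and their inverses, `C₁ ≥ 1` bounds all conjugates of all such entries, and `C₂`
bounds all conjugates of `β'`, then `tr ω = α/β` with `α, β ∈ 𝓞_K`, `β ≠ 0`, and
`|N_{K/ℚ}(α ± 2β)| ≤ (2·(2C₁C₂)^k)^m` where `m = [K:ℚ]`. -/
theorem trace_eq_ratio_with_norm_bound
    (K : Type*) [Field K] [NumberField K]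
    (m : ℕ) (hm : m = Module.finrank ℚ K)
    (R : Finset (Matrix.SpecialLinearGroup (Fin 2) K))
    (β' : 𝓞 K) (hβ' : β' ≠ 0)
    (hden : ∀ γ ∈ R, ∀ i j : Fin 2,
      IsIntegral ℤ (algebraMap (𝓞 K) K β' * (γ : Matrix (Fin 2) (Fin 2) K) i j) ∧
      IsIntegral ℤ (algebraMap (𝓞 K) K β' * (↑(γ⁻¹) : Matrix (Fin 2) (Fin 2) K) i j))
    (C₁ : ℝ) (hC₁ : 1 ≤ C₁)
    (hC₁R : ∀ γ ∈ R, ∀ σ : K →+* ℂ, ∀ i j : Fin 2,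
      ‖σ ((γ : Matrix (Fin 2) (Fin 2) K) i j)‖ ≤ C₁ ∧
      ‖σ ((↑(γ⁻¹) : Matrix (Fin 2) (Fin 2) K) i j)‖ ≤ C₁)
    (C₂ : ℝ) (hC₂ : ∀ σ : K →+* ℂ, ‖σ (algebraMap (𝓞 K) K β')‖ ≤ C₂)
    (k : ℕ) (hk : 1 ≤ k)
    (f : Fin k → Matrix.SpecialLinearGroup (Fin 2) K)
    (hf : ∀ i, f i ∈ R ∨ (f i)⁻¹ ∈ R)
    (ω : Matrix.SpecialLinearGroup (Fin 2) K) (hω : ω = (List.ofFn f).prod) :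
    ∃ α β : 𝓞 K, β ≠ 0 ∧
      Matrix.trace (ω : Matrix (Fin 2) (Fin 2) K) =
        algebraMap (𝓞 K) K α / algebraMap (𝓞 K) K β ∧
      |((Algebra.norm ℚ (algebraMap (𝓞 K) K (α + 2 * β)) : ℚ) : ℝ)| ≤
        (2 * (2 * C₁ * C₂) ^ k) ^ m ∧
      |((Algebra.norm ℚ (algebraMap (𝓞 K) K (α - 2 * β)) : ℚ) : ℝ)| ≤
        (2 * (2 * C₁ * C₂) ^ k) ^ m := by
  subst hm hω
  set b := algebraMap (𝓞 K) K β'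
  set l := (List.ofFn f).map Matrix.SpecialLinearGroup.coeMonoidHom
  have hprod : ((List.ofFn f).prod : Matrix (Fin 2) (Fin 2) K) = l.prod :=
    map_list_prod Matrix.SpecialLinearGroup.coeMonoidHom _
  have hlen : l.length = k := by simp [l]
  have hα : IsIntegral ℤ (b ^ k * Matrix.trace l.prod) := hlen ▸
    Matrix.isIntegral_pow_length_mul_trace_list_prod b
      (Matrix.SpecialLinearGroup.forall_apply_of_mem_map_ofFn (P := fun x => IsIntegral ℤ (b * x))
        (fun γ hγ i j => hden γ hγ i j) hf)
  have htr (σ : K →+* ℂ) : ‖σ (Matrix.trace l.prod)‖ ≤ (2 * C₁) ^ k := by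
    have hne : l ≠ [] := by simpa [l] using Nat.one_le_iff_ne_zero.mp hk
    simpa [hlen] using Matrix.norm_map_trace_list_prod_le σ hne
      (Matrix.SpecialLinearGroup.forall_apply_of_mem_map_ofFn (P := fun x => ‖σ x‖ ≤ C₁)
        (fun γ hγ i j => hC₁R γ hγ σ i j) hf)
  have hbound : ∀ s : K, (∀ σ : K →+* ℂ, ‖σ s‖ ≤ (2 * C₁) ^ k) →
      |(Algebra.norm ℚ (b ^ k * (Matrix.trace l.prod + s)) : ℝ)| ≤
        (2 * (2 * C₁ * C₂) ^ k) ^ Module.finrank ℚ K :=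
    fun s hs => (NumberField.abs_norm_pow_mul_add_le k hC₂ htr hs).trans_eq (by ring)
  have htwo : (2 : ℝ) ≤ (2 * C₁) ^ k :=
    (le_self_pow₀ (by linarith) (by omega)).trans' (by linarith)
  obtain ⟨α, hαK⟩ := (IsIntegralClosure.isIntegral_iff (A := 𝓞 K)).mp hα
  refine ⟨α, β' ^ k, pow_ne_zero k hβ', ?_, ?_, ?_⟩
  · have hb : b ≠ 0 := RingOfIntegers.coe_ne_zero_iff.mpr hβ'
    rw [hαK, map_pow, hprod, mul_div_cancel_left₀ _ (pow_ne_zero k hb)]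
  · convert hbound 2 (fun σ => by rw [map_ofNat, Complex.norm_ofNat]; exact htwo) using 5
    rw [map_add, map_mul, map_pow, map_ofNat, hαK]
    ring
  · convert hbound (-2)
      (fun σ => by rw [map_neg, map_ofNat, norm_neg, Complex.norm_ofNat]; exact htwo) using 5
    rw [map_sub, map_mul, map_pow, map_ofNat, hαK]
    ring
end

section
/- Let C₁, C₂ > 0 be real numbers, set t = √(C₂/C₁), and let a, b, c, d ∈ ℂ satisfy ad − bc = 1 and |c| ≥ C₁. Set s = |d|² + t²·|c|². Then |b·conj(d) + a·conj(c)·t²|²/(2t²·s) + (1 − s)²/(2s) + 1 ≥ C₁·C₂/2. -/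
/-!
Writing `u = (b, t a)` and `v = (d, t c)`, the numerator `b d̄ + a c̄ t²` is the Hermitian
product `⟨u, v⟩` and `s = ‖v‖²`. Lagrange's identity `|⟨u, v⟩|² + |u₁v₂ - u₂v₁|² = ‖u‖²‖v‖²`,
with `u₁v₂ - u₂v₁ = -t (ad - bc) = -t`, collapses the expression to `‖u‖²/(2t²) + s/2`,
which is at least `s/2 ≥ t²|c|²/2 ≥ t²C₁²/2 = C₁C₂/2`.
-/

open ComplexConjugate

namespace Complex

theorem sq_norm_add_mul_conj_add_sq_norm_sub_mul (x₁ x₂ y₁ y₂ : ℂ) :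
    ‖x₁ * conj y₁ + x₂ * conj y₂‖ ^ 2 + ‖x₁ * y₂ - x₂ * y₁‖ ^ 2 =
      (‖x₁‖ ^ 2 + ‖x₂‖ ^ 2) * (‖y₁‖ ^ 2 + ‖y₂‖ ^ 2) := by
  simp only [Complex.sq_norm, normSq_apply, add_re, add_im, sub_re, sub_im, mul_re, mul_im,
    conj_re, conj_im]
  ring

theorem sq_norm_mul_conj_add_of_det_eq_one {a b c d : ℂ} (hdet : a * d - b * c = 1) (t : ℝ) :
    ‖b * conj d + a * conj c * (t : ℂ) ^ 2‖ ^ 2 =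
      (‖b‖ ^ 2 + t ^ 2 * ‖a‖ ^ 2) * (‖d‖ ^ 2 + t ^ 2 * ‖c‖ ^ 2) - t ^ 2 := by
  have lagrange := sq_norm_add_mul_conj_add_sq_norm_sub_mul b (t * a) d (t * c)
  have hcross : b * (t * c) - t * a * d = -t * (a * d - b * c) := by ring
  rw [map_mul, conj_ofReal, hcross, hdet, mul_one, norm_neg, norm_real, Real.norm_eq_abs,
    sq_abs, norm_mul, norm_mul, norm_real, Real.norm_eq_abs, mul_pow, mul_pow, sq_abs] at lagrange
  rw [show a * conj c * (t : ℂ) ^ 2 = t * a * (t * conj c) by ring]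
  linarith

end Complex

theorem div_add_sq_sub_div_add_one_eq {A T s : ℝ} (hT : T ≠ 0) (hs : s ≠ 0) :
    (A * s - T) / (2 * T * s) + (1 - s) ^ 2 / (2 * s) + 1 = A / (2 * T) + s / 2 := by
  field_simp
  ring

/-- The cosh-displacement estimate of Lemma 5.1, case (a): for `t = √(C₂/C₁)`,
`ad - bc = 1` and `|c| ≥ C₁`, setting `s = |d|² + t²|c|²` (which equals `|cζ+d|²` for
`ζ = t·j`), the displacement expression is at least `C₁C₂/2`. -/
theorem cosh_displacement_lower_bound
    (C₁ C₂ : ℝ) (hC₁ : 0 < C₁) (hC₂ : 0 < C₂)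
    (t : ℝ) (ht : t = Real.sqrt (C₂ / C₁))
    (a b c d : ℂ) (hdet : a * d - b * c = 1)
    (hc : C₁ ≤ ‖c‖)
    (s : ℝ) (hs : s = ‖d‖ ^ 2 + t ^ 2 * ‖c‖ ^ 2) :
    C₁ * C₂ / 2 ≤
      ‖b * (starRingEnd ℂ) d + a * (starRingEnd ℂ) c * (t : ℂ) ^ 2‖ ^ 2 /
          (2 * t ^ 2 * s) +
        (1 - s) ^ 2 / (2 * s) + 1 := by
  have ht2 : t ^ 2 = C₂ / C₁ := by rw [ht, Real.sq_sqrt (div_pos hC₂ hC₁).le]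
  have ht2_pos : 0 < t ^ 2 := ht2 ▸ div_pos hC₂ hC₁
  have hc_pos : 0 < ‖c‖ := hC₁.trans_le hc
  have hs_pos : 0 < s := by rw [hs]; positivity
  rw [Complex.sq_norm_mul_conj_add_of_det_eq_one hdet, ← hs,
    div_add_sq_sub_div_add_one_eq ht2_pos.ne' hs_pos.ne']
  have hC₁C₂ : C₁ * C₂ = t ^ 2 * C₁ ^ 2 := by rw [ht2]; field_simp
  have hs_ge : t ^ 2 * C₁ ^ 2 ≤ s := by
    rw [hs]
    nlinarith [pow_le_pow_left₀ hC₁.le hc 2, sq_nonneg ‖d‖]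
  have hquot_nonneg : 0 ≤ (‖b‖ ^ 2 + t ^ 2 * ‖a‖ ^ 2) / (2 * t ^ 2) := by positivity
  linarith
end

section
/- Let s > 0 and d > 0 be real numbers and let g : ℝ → ℝ be a nonnegative nondecreasing function such that g(x) = 0 for all x < s and g(l) < e^{2l}/l for all l > d. Define f(l) = Σ_{i=1}^{∞} g(l/i) (for each l > 0 this is a finite sum, since g(l/i) = 0 whenever i > l/s). Then there exists a constant c' > 0 such that f(l) < c'·e^{2l} for all l > 0. -/
/-- Abstract counting argument (Corollary 2.3): if `g : ℝ → ℝ` is nonnegative,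
nondecreasing, vanishes below `s > 0`, and satisfies `g l < e^{2l}/l` for `l > d`, then
`f l = ∑_{i≥1} g(l/i)` satisfies `f l < c'·e^{2l}` for all `l > 0`, for some constant
`c' > 0`. (For each `l > 0` the sum has only finitely many nonzero terms, since
`g(l/i) = 0` whenever `i > l/s`.) -/
theorem sum_shifted_counting_bound
    (s d : ℝ) (hs : 0 < s) (hd : 0 < d)
    (g : ℝ → ℝ) (hg0 : ∀ x, 0 ≤ g x) (hgmono : Monotone g)
    (hgz : ∀ x : ℝ, x < s → g x = 0)
    (hgb : ∀ l : ℝ, d < l → g l < Real.exp (2 * l) / l) :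
    ∃ c' > 0, ∀ l : ℝ, 0 < l →
      (∑' i : ℕ, g (l / (i + 1))) < c' * Real.exp (2 * l) := by
  set M : ℝ := Real.exp (2 * (d + 1)) / (d + 1) with hM
  have hMpos : 0 < M := div_pos (Real.exp_pos _) (by linarith)
  refine ⟨1/s + 1/d + (d/s + 1) * M, by positivity, ?_⟩
  intro l hl
  set N : ℕ := ⌈l / s⌉₊ with hN
  have hzero : ∀ i ∉ Finset.range N, g (l / (i + 1)) = 0 := by
    intro i hi
    apply hgz
    have h1 : (N : ℝ) ≤ i := by
      have := Finset.mem_range.not.mp hi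
      push_neg at this
      exact_mod_cast this
    have h2 : l / s ≤ N := Nat.le_ceil _
    have h3 : l / s < i + 1 := by linarith
    rw [div_lt_iff₀ (by positivity : (0:ℝ) < (i:ℝ) + 1)]
    have := (div_lt_iff₀ hs).mp h3
    linarith [this]
  have hsum : (∑' i : ℕ, g (l / (i + 1))) = ∑ i ∈ Finset.range N, g (l / (i + 1)) :=
    tsum_eq_sum hzero
  have hterm : ∀ i ∈ Finset.range N, g (l / (i + 1)) ≤ g l := by
    intro i _
    apply hgmono
    rw [div_le_iff₀ (by positivity : (0:ℝ) < (i:ℝ) + 1)]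
    nlinarith [Nat.cast_nonneg (α := ℝ) i, hl]
  have hbound : (∑' i : ℕ, g (l / (i + 1))) ≤ (N : ℝ) * g l := by
    rw [hsum]
    calc ∑ i ∈ Finset.range N, g (l / (i + 1)) ≤ ∑ _i ∈ Finset.range N, g l :=
          Finset.sum_le_sum hterm
      _ = (N : ℝ) * g l := by simp [mul_comm]
  have hNle : (N : ℝ) ≤ l / s + 1 := (Nat.ceil_lt_add_one (by positivity)).le
  have hbound2 : (∑' i : ℕ, g (l / (i + 1))) ≤ (l / s + 1) * g l := by
    calc (∑' i : ℕ, g (l / (i + 1))) ≤ (N : ℝ) * g l := hbound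
      _ ≤ (l / s + 1) * g l := mul_le_mul_of_nonneg_right hNle (hg0 l)
  rcases lt_or_ge d l with hld | hld
  · -- large l
    have hgl : g l < Real.exp (2 * l) / l := hgb l hld
    have hls : 0 < l / s + 1 := by positivity
    have h2 : (l / s + 1) * g l < (l / s + 1) * (Real.exp (2 * l) / l) :=
      mul_lt_mul_of_pos_left hgl hls
    have h3 : (l / s + 1) * (Real.exp (2 * l) / l) = (1/s + 1/l) * Real.exp (2 * l) := by
      field_simp
    have hinv : 1/l ≤ 1/d := one_div_le_one_div_of_le hd hld.le
    have hnn : 0 ≤ (d/s + 1) * M := by positivity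
    have h4 : (1/s + 1/l) * Real.exp (2 * l) ≤
        (1/s + 1/d + (d/s + 1) * M) * Real.exp (2 * l) := by
      apply mul_le_mul_of_nonneg_right _ (Real.exp_pos _).le
      linarith
    linarith
  · -- small l
    have hgl : g l < M := by
      calc g l ≤ g (d + 1) := hgmono (by linarith)
        _ < M := hgb (d + 1) (by linarith)
    have hA : (∑' i : ℕ, g (l / (i + 1))) ≤ (d/s + 1) * M := by
      have h1 : l / s + 1 ≤ d / s + 1 := by gcongr
      have h2 : (l / s + 1) * g l ≤ (d/s + 1) * M := by
        have hls : (0:ℝ) ≤ l / s + 1 := by positivity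
        nlinarith [hg0 l]
      linarith
    have hexp : (1:ℝ) < Real.exp (2 * l) := by
      nlinarith [Real.add_one_le_exp (2 * l)]
    have hc : 0 < 1/s + 1/d + (d/s + 1) * M := by positivity
    have hmul : (1/s + 1/d + (d/s + 1) * M) * 1 <
        (1/s + 1/d + (d/s + 1) * M) * Real.exp (2 * l) :=
      mul_lt_mul_of_pos_left hexp hc
    linarith [one_div_pos.mpr hs, one_div_pos.mpr hd]
end
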